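/- Let ω = exp(2πi/3) and let w = ω·E₃ ∈ U(3) act on the algebra J(3,C) ⊕ M(3,C) by w(X + M) = X + ωM, where J(3,C) is the algebra of 3×3 complex Hermitian matrices. For A, B ∈ SU(3) define φ(B,A)(X + M) = A X A* + B M A*. Then φ : SU(3) × SU(3) → GL(J(3,C) ⊕ M(3,C)) is a group homomorphism, every φ(B,A) commutes with w, and the kernel of φ is {(E,E), (ωE,ωE), (ω²E,ω²E)} ≅ Z_3. -/

import Mathlib

noncomputable section

/-- The special unitary group over index type `I`, as a subgroup of the unitary group. -/
def SU (I : Type) [Fintype I] [DecidableEq I] :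
    Subgroup (Matrix.unitaryGroup I ℂ) :=
  MonoidHom.ker (Matrix.detMonoidHom.comp (Matrix.unitaryGroup I ℂ).subtype)

/-- Underlying matrix of an element of `SU I`. -/
def mat {I : Type} [Fintype I] [DecidableEq I] (A : SU I) : Matrix I I ℂ := A.1.1

/-- `ω = exp(2πi/3)`, a primitive cube root of unity. -/
def ω : ℂ := Complex.exp (2 * Real.pi * Complex.I / 3)

/-- The space `J(3,ℂ) ⊕ M(3,ℂ)`, with the first component intended to range over
Hermitian matrices. -/
abbrev Jpair := Matrix (Fin 3) (Fin 3) ℂ × Matrix (Fin 3) (Fin 3) ℂ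

/-- The action `w(X + M) = X + ωM`. -/
def w (z : Jpair) : Jpair := (z.1, ω • z.2)

/-- The action `φ(B,A)(X + M) = AXA* + BMA*`. -/
def φ (B A : Matrix (Fin 3) (Fin 3) ℂ) (z : Jpair) : Jpair :=
  (A * z.1 * A.conjTranspose, B * z.2 * A.conjTranspose)

/-!
A unitary `A` and a matrix `B` satisfy `B M A* = M` for all `M` exactly when `B = A` and `A` is
central: put `M = 1` to get `B = A*⁻¹ = A`, after which `A M A* = M` says that `A` commutes with
`M`. Central `3 × 3` matrices are scalar, and a scalar matrix of determinant one is `c • 1` with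
`c³ = 1`, i.e. `c ∈ {1, ω, ω²}`. The other properties of `φ` are direct matrix computations.
-/

open Matrix

section UnitaryConjugation

variable {R : Type*} [Monoid R] [StarMul R]

theorem forall_mul_mul_star_eq_self_iff {a b : R} (ha : a ∈ unitary R) :
    (∀ x, b * x * star a = x) ↔ b = a ∧ a ∈ Set.center R := by
  have hinv : star a * a = 1 := Unitary.star_mul_self_of_mem ha
  constructor
  · intro h
    have hba : b = a := by
      calc b = b * 1 * star a * a := by rw [mul_one, mul_assoc, hinv, mul_one]
        _ = a := by rw [h 1, one_mul]
    subst hba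
    refine ⟨rfl, Semigroup.mem_center_iff.mpr fun x => ?_⟩
    calc x * b = b * x * star b * b := by rw [h x]
      _ = b * x := by rw [mul_assoc, hinv, mul_one]
  · rintro ⟨rfl, hcenter⟩ x
    rw [← Semigroup.mem_center_iff.mp hcenter x, mul_assoc, Unitary.mul_star_self_of_mem ha,
      mul_one]

end UnitaryConjugation

theorem isPrimitiveRoot_ω : IsPrimitiveRoot ω 3 := by
  rw [ω]
  exact_mod_cast Complex.isPrimitiveRoot_exp 3 (by norm_num)

theorem eq_one_or_eq_ω_or_eq_ω_sq_of_pow_three_eq_one {c : ℂ} (hc : c ^ 3 = 1) :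
    c = 1 ∨ c = ω ∨ c = ω ^ 2 := by
  obtain ⟨i, hi, rfl⟩ := isPrimitiveRoot_ω.eq_pow_of_pow_eq_one hc
  interval_cases i <;> simp

theorem mem_center_iff_of_det_eq_one {A : Matrix (Fin 3) (Fin 3) ℂ} (hdet : A.det = 1) :
    A ∈ Set.center (Matrix (Fin 3) (Fin 3) ℂ) ↔ A = 1 ∨ A = ω • 1 ∨ A = ω ^ 2 • 1 := by
  have hscalar (c : ℂ) : scalar (Fin 3) c = c • 1 := by rw [scalar_apply, smul_one_eq_diagonal]
  simp only [center_eq_range, Set.mem_range, hscalar]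
  constructor
  · rintro ⟨c, rfl⟩
    have hc : c ^ 3 = 1 := by simpa [det_smul] using hdet
    rcases eq_one_or_eq_ω_or_eq_ω_sq_of_pow_three_eq_one hc with rfl | rfl | rfl <;> simp
  · rintro (rfl | rfl | rfl)
    exacts [⟨1, one_smul _ _⟩, ⟨ω, rfl⟩, ⟨ω ^ 2, rfl⟩]

section SU

variable {I : Type} [Fintype I] [DecidableEq I]

theorem mat_mul (A B : SU I) : mat (A * B) = mat A * mat B := rfl

theorem mat_mem_unitary (A : SU I) : mat A ∈ unitary (Matrix I I ℂ) := A.1.2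

theorem det_mat (A : SU I) : (mat A).det = 1 := A.2

end SU

section Action

variable (B A : Matrix (Fin 3) (Fin 3) ℂ)

theorem φ_one (z : Jpair) : φ 1 1 z = z := by
  simp [φ]

theorem φ_mul (B₂ A₂ : Matrix (Fin 3) (Fin 3) ℂ) (z : Jpair) :
    φ (B * B₂) (A * A₂) z = φ B A (φ B₂ A₂ z) := by
  simp [φ, conjTranspose_mul, Matrix.mul_assoc]

theorem φ_add (z₁ z₂ : Jpair) : φ B A (z₁ + z₂) = φ B A z₁ + φ B A z₂ := by
  simp [φ, Matrix.mul_add, Matrix.add_mul]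

theorem φ_smul {S : Type*} [Monoid S] [DistribMulAction S ℂ] [IsScalarTower S ℂ ℂ]
    [SMulCommClass S ℂ ℂ] (r : S) (z : Jpair) : φ B A (r • z) = r • φ B A z := by
  simp [φ, Matrix.mul_smul, Matrix.smul_mul]

theorem φ_w (z : Jpair) : φ B A (w z) = w (φ B A z) := by
  simp [φ, w]

theorem isHermitian_φ_fst {z : Jpair} (hz : z.1.IsHermitian) : (φ B A z).1.IsHermitian :=
  isHermitian_mul_mul_conjTranspose A hz

variable {B A}

theorem φ_bijective (hB : B ∈ unitary (Matrix (Fin 3) (Fin 3) ℂ))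
    (hA : A ∈ unitary (Matrix (Fin 3) (Fin 3) ℂ)) : Function.Bijective (φ B A) := by
  refine Function.bijective_iff_has_inverse.mpr ⟨φ Bᴴ Aᴴ, fun z => ?_, fun z => ?_⟩
  · simpa [← φ_mul, ← star_eq_conjTranspose, Unitary.star_mul_self_of_mem, hA, hB] using φ_one z
  · simpa [← φ_mul, ← star_eq_conjTranspose, Unitary.mul_star_self_of_mem, hA, hB] using φ_one z

theorem forall_φ_eq_self_iff (hA : A ∈ unitary (Matrix (Fin 3) (Fin 3) ℂ)) :
    (∀ z : Jpair, z.1.IsHermitian → φ B A z = z) ↔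
      B = A ∧ A ∈ Set.center (Matrix (Fin 3) (Fin 3) ℂ) := by
  constructor
  · intro h
    rw [← forall_mul_mul_star_eq_self_iff hA]
    exact fun M => congrArg Prod.snd (h (0, M) isHermitian_zero)
  · rintro ⟨rfl, hcenter⟩ z -
    have hconj := (forall_mul_mul_star_eq_self_iff hA).mpr ⟨rfl, hcenter⟩
    simp [φ, ← star_eq_conjTranspose, hconj]

end Action

/-- `φ : SU(3) × SU(3) → GL(J(3,ℂ) ⊕ M(3,ℂ))` is a group homomorphism, every `φ(B,A)`
commutes with `w` and preserves Hermitian first components, and the kernel of `φ` is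
`{(E,E), (ωE,ωE), (ω²E,ω²E)} ≅ ℤ₃`. -/
theorem φ_su3_su3_hom_commutes_with_w_kernel_z3 :
    -- `φ` is a group homomorphism into invertible linear maps
    (∀ B₁ A₁ B₂ A₂ : SU (Fin 3), ∀ z : Jpair,
      φ (mat (B₁ * B₂)) (mat (A₁ * A₂)) z =
        φ (mat B₁) (mat A₁) (φ (mat B₂) (mat A₂) z)) ∧
    (∀ B A : SU (Fin 3), Function.Bijective (φ (mat B) (mat A))) ∧
    (∀ B A : SU (Fin 3), ∀ z₁ z₂ : Jpair,
      φ (mat B) (mat A) (z₁ + z₂) = φ (mat B) (mat A) z₁ + φ (mat B) (mat A) z₂) ∧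
    (∀ B A : SU (Fin 3), ∀ (r : ℝ) (z : Jpair),
      φ (mat B) (mat A) (r • z) = r • φ (mat B) (mat A) z) ∧
    -- `φ(B,A)` preserves the Hermitian condition on the first component
    (∀ B A : SU (Fin 3), ∀ z : Jpair, z.1.IsHermitian →
      (φ (mat B) (mat A) z).1.IsHermitian) ∧
    -- every `φ(B,A)` commutes with `w`
    (∀ B A : SU (Fin 3), ∀ z : Jpair,
      φ (mat B) (mat A) (w z) = w (φ (mat B) (mat A) z)) ∧
    -- the kernel of `φ` is `{(E,E), (ωE,ωE), (ω²E,ω²E)}`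
    (∀ B A : SU (Fin 3),
      ((∀ z : Jpair, z.1.IsHermitian → φ (mat B) (mat A) z = z) ↔
        (mat A = 1 ∧ mat B = 1) ∨
        (mat A = ω • 1 ∧ mat B = ω • 1) ∨
        (mat A = ω ^ 2 • 1 ∧ mat B = ω ^ 2 • 1))) := by
  refine ⟨fun B₁ A₁ B₂ A₂ z => by rw [mat_mul, mat_mul, φ_mul],
    fun B A => φ_bijective (mat_mem_unitary B) (mat_mem_unitary A),
    fun B A => φ_add _ _, fun B A => φ_smul _ _, fun B A _ => isHermitian_φ_fst _ _,
    fun B A => φ_w _ _, fun B A => ?_⟩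
  rw [forall_φ_eq_self_iff (mat_mem_unitary A), mem_center_iff_of_det_eq_one (det_mat A)]
  constructor
  · rintro ⟨hBA, hA | hA | hA⟩ <;> simp [hBA, hA]
  · rintro (⟨hA, hB⟩ | ⟨hA, hB⟩ | ⟨hA, hB⟩) <;> simp [hA, hB]
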